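/- For any index i ∈ {0,1,2,3}: either (a e₀)·(b e_i) = a b e_i for all a, b ∈ A, or (a e₀)·(b e_i) = a* b e_i for all a, b ∈ A; moreover for i = 0 necessarily (a e₀)·(b e₀) = a b e₀ for all a, b ∈ A. Consequently there exists an involution τ ∈ Γ with τ² = 1 such that the multiplication x ⋆ y = τ(τ(x)·τ(y)) satisfies the Lagrange identity, has e₀ as identity element, satisfies (a e₀) ⋆ y = a y for all a ∈ A and y ∈ E, and τ : (E,⋆) → (E,·) is an isomorphism of unital A₀-algebras. -/

import Mathlib

open LaurentPolynomial

/-- `A = ℤ[z, z⁻¹]`, the Laurent polynomial ring over the integers. -/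
abbrev A : Type := LaurentPolynomial ℤ

/-- The conjugation `f(z) ↦ f(z⁻¹)` on `A`. -/
noncomputable def conj : A →+* A := (LaurentPolynomial.invert (R := ℤ)).toRingEquiv.toRingHom

/-- The fixed subring `A₀ = {f ∈ A | f* = f}`. -/
noncomputable def A0 : Subring A := RingHom.eqLocus conj (RingHom.id A)

/-- `E = A⁴`. -/
abbrev E : Type := Fin 4 → A

/-- The norm `N(x) = ∑ₖ xₖ xₖ*`. -/
noncomputable def N (x : E) : A := ∑ k, x k * conj (x k)

/-- The standard `A`-basis vectors of `E = A⁴`. -/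
noncomputable def e (k : Fin 4) : E := Pi.single k 1

/-- Yang's multiplication `x ∘ y = (p, q, r, s)`. -/
noncomputable def yang (x y : E) : E :=
  ![x 0 * y 0 - x 1 * conj (y 1) - x 2 * conj (y 2) - x 3 * conj (y 3),
    x 0 * y 1 + x 1 * conj (y 0) + conj (x 2) * conj (y 3) - conj (x 3) * conj (y 2),
    x 0 * y 2 - conj (x 1) * conj (y 3) + x 2 * conj (y 0) + conj (x 3) * conj (y 1),
    x 0 * y 3 + conj (x 1) * conj (y 2) - conj (x 2) * conj (y 1) + x 3 * conj (y 0)]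

/-!
Polarizing the Lagrange identity gives `⟨x·y, x'·y'⟩ + ⟨x·y', x'·y⟩ = ⟨x, x'⟩ ⟨y, y'⟩` for the
form `⟨x, y⟩ = N (x + y) - N x - N y`. Comparing constant coefficients (sums of squares) shows
that the vectors of norm `1` are the `±zⁿ eₖ`. With `x = z e₀`, `x' = e₀` this forces
`(z e₀)·eᵢ = z^s eᵢ` for some `s = ±1`, and then `(z e₀)·(z eᵢ) = z^(s+1) eᵢ`. Since
`A = A₀ ⊕ A₀ z` and the multiplication is `A₀`-bilinear, these two products determine every
`(a e₀)·(b eᵢ)`: it is `a b eᵢ` or `a* b eᵢ`. The right identity `(z e₀)·e₀ = z e₀` rules out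
the second case for `i = 0`, and `τ` conjugates exactly the coordinates on which `a e₀` acts
through `a*`.
-/

lemma conj_T (n : ℤ) : conj (T n) = T (-n) := invert_T n

lemma conj_conj (f : A) : conj (conj f) = f := involutive_invert f

lemma T_add_T_neg_mem_A0 (n : ℤ) : T n + T (-n) ∈ A0 := by
  change conj _ = _
  rw [map_add, conj_T, conj_T, neg_neg, add_comm]; rfl

lemma C_mem_A0 (r : ℤ) : (C r : A) ∈ A0 := invert_C r

-- `z² = (z + z⁻¹) z - 1` and `z⁻¹ = (z + z⁻¹) - z` keep the coefficients in `A₀`.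
lemma exists_T_eq_add_mul_T_one (n : ℤ) : ∃ c d : A0, (T n : A) = (c : A) + (d : A) * T 1 := by
  have hT : (T (-1) : A) * T 1 = 1 := by rw [← T_add]; rfl
  let s : A0 := ⟨T 1 + T (-1), T_add_T_neg_mem_A0 1⟩
  induction n using Int.induction_on with
  | zero => exact ⟨1, 0, by simp⟩
  | succ n ih =>
    obtain ⟨c, d, hn⟩ := ih
    refine ⟨-d, c + d * s, ?_⟩
    rw [T_add, hn]
    push_cast [s]
    linear_combination (-(d : A)) * hT
  | pred n ih =>
    obtain ⟨c, d, hn⟩ := ih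
    refine ⟨c * s + d, -c, ?_⟩
    rw [sub_eq_add_neg, T_add, hn]
    push_cast [s]
    linear_combination (d : A) * hT

lemma exists_eq_add_mul_T_one (a : A) : ∃ c d : A0, a = (c : A) + (d : A) * T 1 := by
  induction a using LaurentPolynomial.induction_on' with
  | add p q hp hq =>
    obtain ⟨c, d, rfl⟩ := hp
    obtain ⟨c', d', rfl⟩ := hq
    exact ⟨c + c', d + d', by push_cast; ring⟩
  | C_mul_T n r =>
    obtain ⟨c, d, hn⟩ := exists_T_eq_add_mul_T_one n
    let r' : A0 := ⟨C r, C_mem_A0 r⟩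
    exact ⟨r' * c, r' * d, by rw [hn]; push_cast [r']; ring⟩

lemma coeff_zero_mul_conj (f : A) :
    (f * conj f).coeff 0 = ∑ n ∈ f.coeff.support, f.coeff n ^ 2 := by
  classical
  rw [AddMonoidAlgebra.coeff_mul, Finsupp.sum]
  refine Finset.sum_congr rfl fun n _ => ?_
  rw [Finsupp.sum, Finset.sum_eq_single (-n)]
  · simp [conj, invert_apply, sq]
  · intro m _ hm; rw [if_neg]; omega
  · intro h
    simp [Finsupp.notMem_support_iff.mp h]

lemma exists_eq_one_of_sum_eq_one {ι : Type*} {s : Finset ι} {g : ι → ℤ}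
    (hg : ∀ i ∈ s, 0 ≤ g i) (h : ∑ i ∈ s, g i = 1) :
    ∃ j ∈ s, g j = 1 ∧ ∀ k ∈ s, k ≠ j → g k = 0 := by
  classical
  obtain ⟨j, hj, hj0⟩ := Finset.exists_ne_zero_of_sum_ne_zero (h ▸ one_ne_zero)
  have hsplit := Finset.add_sum_erase s g hj
  have hrest : 0 ≤ ∑ k ∈ s.erase j, g k :=
    Finset.sum_nonneg fun k hk => hg k (Finset.mem_of_mem_erase hk)
  have hj1 : g j = 1 := by have := hg j hj; omega
  refine ⟨j, hj, hj1, fun k hk hkj => ?_⟩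
  have hzero : ∑ k ∈ s.erase j, g k = 0 := by omega
  exact (Finset.sum_eq_zero_iff_of_nonneg fun k hk => hg k (Finset.mem_of_mem_erase hk)).mp
    hzero k (Finset.mem_erase.mpr ⟨hkj, hk⟩)

lemma coeff_zero_mul_conj_nonneg (f : A) : 0 ≤ (f * conj f).coeff 0 := by
  rw [coeff_zero_mul_conj]
  exact Finset.sum_nonneg fun n _ => sq_nonneg _

lemma eq_zero_of_coeff_zero_mul_conj_eq_zero {f : A} (h : (f * conj f).coeff 0 = 0) :
    f = 0 := by
  rw [coeff_zero_mul_conj, Finset.sum_eq_zero_iff_of_nonneg fun n _ => sq_nonneg _] at h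
  ext n
  by_contra hn
  exact hn (pow_eq_zero_iff two_ne_zero |>.mp (h n (Finsupp.mem_support_iff.mpr hn)))

lemma exists_eq_T_of_coeff_zero_mul_conj_eq_one {f : A} (h : (f * conj f).coeff 0 = 1) :
    ∃ n, f = T n ∨ f = -T n := by
  rw [coeff_zero_mul_conj] at h
  obtain ⟨n, hn, hn1, hrest⟩ := exists_eq_one_of_sum_eq_one (fun n _ => sq_nonneg _) h
  refine ⟨n, ?_⟩
  have hf : ∀ m, m ≠ n → f.coeff m = 0 := fun m hm => by
    by_cases hm' : m ∈ f.coeff.support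
    · exact pow_eq_zero_iff two_ne_zero |>.mp (hrest m hm' hm)
    · exact Finsupp.notMem_support_iff.mp hm'
  rcases sq_eq_one_iff.mp hn1 with h1 | h1
  · left
    ext m
    rw [T_apply]
    split_ifs with hm
    · rw [← hm, h1]
    · exact hf m (Ne.symm hm)
  · right
    ext m
    rw [AddMonoidAlgebra.coeff_neg, Finsupp.neg_apply, T_apply]
    split_ifs with hm
    · rw [← hm, h1]
    · rw [hf m (Ne.symm hm), neg_zero]

lemma exists_eq_single_T_of_N_eq_one {v : E} (hv : N v = 1) :
    ∃ k n, v = Pi.single k (T n : A) ∨ v = Pi.single k (-T n : A) := by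
  classical
  have h0 : ∑ k, (v k * conj (v k)).coeff 0 = 1 := by
    have := congrArg (fun f : A => f.coeff 0) hv
    simpa [N, AddMonoidAlgebra.coeff_sum] using this
  obtain ⟨k, -, hk1, hrest⟩ :=
    exists_eq_one_of_sum_eq_one (fun k _ => coeff_zero_mul_conj_nonneg (v k)) h0
  obtain ⟨n, hn⟩ := exists_eq_T_of_coeff_zero_mul_conj_eq_one hk1
  have hv : v = Pi.single k (v k) := funext fun j => by
    by_cases hj : j = k
    · subst hj; simp
    · rw [Pi.single_eq_of_ne hj]
      exact eq_zero_of_coeff_zero_mul_conj_eq_zero (hrest j (Finset.mem_univ j) hj)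
  rw [hv]
  exact ⟨k, n, hn.imp (congrArg _) (congrArg _)⟩

noncomputable def polar (x y : E) : A := ∑ k, (x k * conj (y k) + y k * conj (x k))

lemma N_add (x y : E) : N (x + y) = N x + N y + polar x y := by
  simp only [N, polar, Pi.add_apply, map_add, ← Finset.sum_add_distrib]
  exact Finset.sum_congr rfl fun _ _ => by ring

lemma polar_comm (x y : E) : polar x y = polar y x :=
  Finset.sum_congr rfl fun _ _ => add_comm _ _

lemma polar_add_left (x x' y : E) : polar (x + x') y = polar x y + polar x' y := by
  simp only [polar, Pi.add_apply, map_add, ← Finset.sum_add_distrib]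
  exact Finset.sum_congr rfl fun _ _ => by ring

lemma polar_add_right (x y y' : E) : polar x (y + y') = polar x y + polar x y' := by
  rw [polar_comm, polar_add_left, polar_comm y, polar_comm y']

lemma N_single (k : Fin 4) (f : A) : N (Pi.single k f) = f * conj f := by
  rw [N, Finset.sum_eq_single k (fun j _ hj => by simp [Pi.single_eq_of_ne hj]) (by simp)]
  simp

lemma polar_single (k i : Fin 4) (f g : A) :
    polar (Pi.single k f) (Pi.single i g) = if k = i then f * conj g + g * conj f else 0 := by
  split_ifs with hki
  · subst hki
    rw [polar, Finset.sum_eq_single k (fun j _ hj => by simp [Pi.single_eq_of_ne hj]) (by simp)]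
    simp
  · refine Finset.sum_eq_zero fun j _ => ?_
    by_cases hj : j = k
    · subst hj; simp [Pi.single_eq_of_ne hki]
    · simp [Pi.single_eq_of_ne hj]

lemma smul_e (a : A) (k : Fin 4) : a • e k = Pi.single k a := by
  rw [e, ← Pi.single_smul, smul_eq_mul, mul_one]

lemma N_T_smul_e (n : ℤ) (i : Fin 4) : N ((T n : A) • e i) = 1 := by
  rw [smul_e, N_single, conj_T, ← T_add, add_neg_cancel, T_zero]

lemma N_e (i : Fin 4) : N (e i) = 1 := by
  simpa using N_T_smul_e 0 i

lemma polar_T_smul_e (m n : ℤ) (i : Fin 4) :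
    polar ((T m : A) • e i) ((T n : A) • e i) = T (m - n) + T (-(m - n)) := by
  rw [smul_e, smul_e, polar_single, if_pos rfl, conj_T, conj_T, ← T_add, ← T_add]
  ring_nf

lemma T_add_T_neg_eq_iff {m n : ℤ} : (T m + T (-m) : A) = T n + T (-n) ↔ m = n ∨ m = -n := by
  constructor
  · intro h
    have := congrArg (fun f : A => f.coeff m) h
    simp only [AddMonoidAlgebra.coeff_add, Finsupp.add_apply, T_apply] at this
    split_ifs at this <;> omega
  · rintro (rfl | rfl)
    · rfl
    · rw [neg_neg, add_comm]

lemma T_add_T_neg_ne_zero (n : ℤ) : (T n + T (-n) : A) ≠ 0 := by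
  intro h
  have := congrArg (fun f : A => f.coeff n) h
  simp only [AddMonoidAlgebra.coeff_add, Finsupp.add_apply, T_apply] at this
  split_ifs at this <;> simp_all

lemma eq_T_smul_e_of_polar_e {v : E} {n : ℤ} {i : Fin 4} (hv : N v = 1)
    (h : polar v (e i) = T n + T (-n)) : v = (T n : A) • e i ∨ v = (T (-n) : A) • e i := by
  obtain ⟨k, m, hm | hm⟩ := exists_eq_single_T_of_N_eq_one hv <;>
    rw [hm, e, polar_single] at h <;> split_ifs at h with hki
  · subst hki
    simp only [map_one, mul_one, one_mul, conj_T] at h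
    rcases T_add_T_neg_eq_iff.mp h with rfl | rfl
    · exact Or.inl (by rw [hm, smul_e])
    · exact Or.inr (by rw [hm, smul_e])
  · exact absurd h.symm (T_add_T_neg_ne_zero n)
  · simp only [map_one, mul_one, one_mul, map_neg, conj_T, ← neg_add] at h
    have := congrArg (fun f : A => f.coeff n) h
    simp only [AddMonoidAlgebra.coeff_add, AddMonoidAlgebra.coeff_neg, Finsupp.add_apply,
      Finsupp.neg_apply, T_apply] at this
    split_ifs at this <;> omega
  · exact absurd h.symm (T_add_T_neg_ne_zero n)

lemma polar_T_smul_e_e (m : ℤ) (i : Fin 4) : polar ((T m : A) • e i) (e i) = T m + T (-m) := by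
  simpa using polar_T_smul_e m 0 i

lemma T_one_add_T_neg_one_sq : (T 1 + T (-1) : A) * (T 1 + T (-1)) = T 2 + T (-2) + 2 := by
  simp only [add_mul, mul_add, ← T_add]
  norm_num
  ring

lemma add_mul_T_one_smul (c d : A0) (x : E) :
    ((c : A) + (d : A) * T 1) • x = c • x + d • ((T 1 : A) • x) := by
  rw [add_smul, mul_smul]; rfl

lemma mul_smul_e_zero_smul_e {mul : E →ₗ[A0] E →ₗ[A0] E} (hid_left : ∀ x : E, mul (e 0) x = x)
    (σ : A →+* A) (hσ : ∀ c : A0, σ c = c) {i : Fin 4}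
    (h1 : mul ((T 1 : A) • e 0) (e i) = σ (T 1) • e i)
    (h2 : mul ((T 1 : A) • e 0) ((T 1 : A) • e i) = (σ (T 1) * T 1) • e i) (a b : A) :
    mul (a • e 0) (b • e i) = (σ a * b) • e i := by
  have hz : ∀ b : A, mul ((T 1 : A) • e 0) (b • e i) = (σ (T 1) * b) • e i := by
    intro b
    obtain ⟨c, d, rfl⟩ := exists_eq_add_mul_T_one b
    rw [add_mul_T_one_smul c d, map_add, LinearMap.map_smul, LinearMap.map_smul, h1, h2]
    simp only [Subring.smul_def, smul_smul, ← add_smul]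
    congr 1
    ring
  obtain ⟨c, d, rfl⟩ := exists_eq_add_mul_T_one a
  rw [add_mul_T_one_smul c d, map_add, LinearMap.map_smul, LinearMap.map_smul, LinearMap.add_apply,
    LinearMap.smul_apply, LinearMap.smul_apply, hid_left, hz, map_add, map_mul, hσ, hσ]
  simp only [Subring.smul_def, smul_smul, ← add_smul]
  congr 1
  ring

section
variable {mul : E →ₗ[A0] E →ₗ[A0] E} (hL : ∀ x y : E, N (mul x y) = N x * N y)
include hL

lemma polar_mul_mul_left (x y y' : E) : polar (mul x y) (mul x y') = N x * polar y y' := by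
  have h := hL x (y + y')
  rw [map_add, N_add, N_add, hL x y, hL x y'] at h
  linear_combination h

lemma polar_mul_add_polar_mul (x x' y y' : E) :
    polar (mul x y) (mul x' y') + polar (mul x y') (mul x' y) = polar x x' * polar y y' := by
  have h := polar_mul_mul_left hL (x + x') y y'
  rw [map_add, LinearMap.add_apply, LinearMap.add_apply, polar_add_left, polar_add_right,
    polar_add_right, N_add, polar_mul_mul_left hL x, polar_mul_mul_left hL x',
    polar_comm (mul x' y)] at h
  linear_combination h

variable (hid_left : ∀ x : E, mul (e 0) x = x)
include hid_left

lemma mul_T_one_smul_e_zero_e (i : Fin 4) :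
    mul ((T 1 : A) • e 0) (e i) = (T 1 : A) • e i ∨
      mul ((T 1 : A) • e 0) (e i) = (T (-1) : A) • e i := by
  have hpolar : polar (mul ((T 1 : A) • e 0) (e i)) (e i) = T 1 + T (-1) := by
    have h := polar_mul_add_polar_mul hL ((T 1 : A) • e 0) (e 0) (e i) (e i)
    have hi : polar (e i) (e i) = 2 := by simpa [one_add_one_eq_two] using polar_T_smul_e_e 0 i
    rw [hid_left, polar_T_smul_e_e, hi, ← two_mul, mul_comm _ 2] at h
    have h2 : (2 : A) ≠ 0 := by simpa [one_add_one_eq_two] using T_add_T_neg_ne_zero 0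
    exact mul_left_cancel₀ h2 h
  refine eq_T_smul_e_of_polar_e ?_ hpolar
  rw [hL, N_T_smul_e, N_e, one_mul]

lemma mul_T_one_smul_e_zero (i : Fin 4) :
    ∃ s : ℤ, (s = 1 ∨ s = -1) ∧ mul ((T 1 : A) • e 0) (e i) = (T s : A) • e i ∧
      mul ((T 1 : A) • e 0) ((T 1 : A) • e i) = (T (s + 1) : A) • e i := by
  obtain ⟨s, hs, hu⟩ :
      ∃ s : ℤ, (s = 1 ∨ s = -1) ∧ mul ((T 1 : A) • e 0) (e i) = (T s : A) • e i := by
    rcases mul_T_one_smul_e_zero_e hL hid_left i with h | h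
    exacts [⟨1, .inl rfl, h⟩, ⟨-1, .inr rfl, h⟩]
  refine ⟨s, hs, hu, ?_⟩
  have hwe : polar (mul ((T 1 : A) • e 0) ((T 1 : A) • e i)) (e i) = T (s + 1) + T (-(s + 1)) := by
    have h := polar_mul_add_polar_mul hL ((T 1 : A) • e 0) (e 0) ((T 1 : A) • e i) (e i)
    rw [hid_left, hid_left, hu, polar_T_smul_e, polar_T_smul_e_e, polar_T_smul_e_e,
      T_one_add_T_neg_one_sq] at h
    rcases hs with rfl | rfl <;> norm_num at h ⊢ <;> linear_combination h
  have hwu : polar (mul ((T 1 : A) • e 0) ((T 1 : A) • e i)) ((T s : A) • e i) = T 1 + T (-1) := by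
    rw [← hu, polar_mul_mul_left hL, N_T_smul_e, polar_T_smul_e_e, one_mul]
  rcases eq_T_smul_e_of_polar_e (by rw [hL, N_T_smul_e, N_T_smul_e, one_mul]) hwe with hw | hw
  · exact hw
  · -- `hwu` excludes the root `z^(-(s+1))` unless `s = -1`, where the two roots coincide.
    rw [hw, polar_T_smul_e, T_add_T_neg_eq_iff] at hwu
    obtain rfl : s = -1 := by omega
    rw [hw]; norm_num

lemma mul_smul_e_zero_smul_e_dichotomy (i : Fin 4) :
    (∀ a b : A, mul (a • e 0) (b • e i) = (a * b) • e i) ∨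
      (∀ a b : A, mul (a • e 0) (b • e i) = (conj a * b) • e i) := by
  obtain ⟨s, hs | hs, hu, hw⟩ := mul_T_one_smul_e_zero hL hid_left i <;> subst hs
  · refine .inl (mul_smul_e_zero_smul_e hid_left (RingHom.id A) (fun _ => rfl) hu ?_)
    rw [hw, RingHom.id_apply, ← T_add]
  · refine .inr (mul_smul_e_zero_smul_e hid_left conj (fun c => c.2) (by rw [hu, conj_T]) ?_)
    rw [hw, conj_T, ← T_add]

variable (hid_right : ∀ x : E, mul x (e 0) = x)
include hid_right

lemma mul_smul_e_zero_smul_e_zero (a b : A) : mul (a • e 0) (b • e 0) = (a * b) • e 0 := by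
  refine (mul_smul_e_zero_smul_e_dichotomy hL hid_left 0).resolve_right (fun h => ?_) a b
  have h1 := congrFun (h (T 1) 1) 0
  rw [one_smul, hid_right, mul_one, conj_T, smul_e, smul_e, Pi.single_eq_same,
    Pi.single_eq_same] at h1
  have := congrArg (fun f : A => f.coeff 1) h1
  simp [T_apply] at this

lemma exists_mul_smul_e_zero_eq :
    ∃ ε : Fin 4 → Bool, ε 0 = false ∧
      ∀ (a : A) (y : E), mul (a • e 0) y = fun k => (if ε k then conj a else a) * y k := by
  have hcoord : ∀ i : Fin 4, ∃ s : Bool, (i = 0 → s = false) ∧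
      ∀ a b : A, mul (a • e 0) (b • e i) = ((if s then conj a else a) * b) • e i := by
    intro i
    by_cases hi : i = 0
    · subst hi
      exact ⟨false, fun _ => rfl, mul_smul_e_zero_smul_e_zero hL hid_left hid_right⟩
    · rcases mul_smul_e_zero_smul_e_dichotomy hL hid_left i with h | h
      exacts [⟨false, fun _ => rfl, h⟩, ⟨true, fun h0 => absurd h0 hi, h⟩]
  choose ε hε0 hε using hcoord
  refine ⟨ε, hε0 0 rfl, fun a y => ?_⟩
  conv_lhs => rw [← Finset.univ_sum_single y]
  rw [map_sum]
  refine (Finset.sum_congr rfl fun i _ => ?_).trans (Finset.univ_sum_single _)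
  rw [← smul_e, hε, smul_e]
end

noncomputable def twist (ε : Fin 4 → Bool) (x : E) : E := fun k => if ε k then conj (x k) else x k

section
variable (ε : Fin 4 → Bool)

lemma twist_involutive : Function.Involutive (twist ε) := fun x => by
  funext k
  by_cases h : ε k <;> simp [twist, h, conj_conj]

lemma N_twist (x : E) : N (twist ε x) = N x :=
  Finset.sum_congr rfl fun k _ => by
    by_cases h : ε k <;> simp [twist, h, conj_conj, mul_comm]

lemma twist_add (x y : E) : twist ε (x + y) = twist ε x + twist ε y := by
  funext k
  by_cases h : ε k <;> simp [twist, h]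

lemma twist_smul (c : A0) (x : E) : twist ε (c • x) = c • twist ε x := by
  have hc : conj (c : A) = c := c.2
  funext k
  by_cases h : ε k <;> simp [twist, h, Subring.smul_def, hc]

lemma twist_e (k : Fin 4) : twist ε (e k) = e k := by
  funext j
  by_cases hj : j = k
  · subst hj; simp [twist, e]
  · simp [twist, e, Pi.single_eq_of_ne hj]

lemma twist_smul_e {k : Fin 4} (hk : ε k = false) (a : A) : twist ε (a • e k) = a • e k := by
  rw [smul_e]
  funext j
  by_cases hj : j = k
  · subst hj; simp [twist, hk]
  · simp [twist, Pi.single_eq_of_ne hj]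
end

/-- Lemma 4.4: for each index `i`, either `(a e₀)·(b eᵢ) = a b eᵢ` for all `a, b`,
or `(a e₀)·(b eᵢ) = a* b eᵢ` for all `a, b`; for `i = 0` necessarily the former
holds.  Consequently there is an involution `τ ∈ Γ` (given by conjugating the
coordinates in a subset, encoded by `ε : Fin 4 → Bool`) such that the modified
multiplication `x ⋆ y = τ(τ(x)·τ(y))` satisfies the Lagrange identity, has `e₀`
as identity, satisfies `(a e₀) ⋆ y = a y`, and `τ : (E,⋆) → (E,·)` is an
isomorphism of unital `A₀`-algebras. -/
theorem scalar_action_lemma (mul : E →ₗ[A0] E →ₗ[A0] E)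
    (hL : ∀ x y : E, N (mul x y) = N x * N y)
    (hid : ∀ x : E, mul (e 0) x = x ∧ mul x (e 0) = x) :
    (∀ i : Fin 4,
      (∀ a b : A, mul (a • e 0) (b • e i) = (a * b) • e i) ∨
      (∀ a b : A, mul (a • e 0) (b • e i) = (conj a * b) • e i)) ∧
    (∀ a b : A, mul (a • e 0) (b • e 0) = (a * b) • e 0) ∧
    ∃ ε : Fin 4 → Bool,
      ∀ (τ : E → E) (star : E → E → E),
        τ = (fun x k => if ε k then conj (x k) else x k) →
        star = (fun x y => τ (mul (τ x) (τ y))) →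
        τ ∘ τ = id ∧
        (∀ x y : E, N (star x y) = N x * N y) ∧
        (∀ x : E, star (e 0) x = x ∧ star x (e 0) = x) ∧
        (∀ (a : A) (y : E), star (a • e 0) y = a • y) ∧
        -- `τ : (E,⋆) → (E,·)` is an isomorphism of unital `A₀`-algebras:
        Function.Bijective τ ∧
        (∀ x y : E, τ (x + y) = τ x + τ y) ∧
        (∀ (c : A0) (x : E), τ (c • x) = c • τ x) ∧
        τ (e 0) = e 0 ∧
        (∀ x y : E, τ (star x y) = mul (τ x) (τ y)) := by
  have hid_left x := (hid x).1
  have hid_right x := (hid x).2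
  obtain ⟨ε, hε0, hmul⟩ := exists_mul_smul_e_zero_eq hL hid_left hid_right
  refine ⟨mul_smul_e_zero_smul_e_dichotomy hL hid_left,
    mul_smul_e_zero_smul_e_zero hL hid_left hid_right, ε, fun τ star hτ hstar => ?_⟩
  obtain rfl : τ = twist ε := hτ
  subst hstar
  have hτ := twist_involutive ε
  refine ⟨hτ.comp_self, fun x y => ?_, fun x => ?_, fun a y => ?_, hτ.bijective, twist_add ε,
    twist_smul ε, twist_e ε 0, fun x y => hτ _⟩
  · simp only [N_twist, hL]
  · simp only [twist_e, hid_left, hid_right, hτ x, and_self]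
  · beta_reduce
    rw [twist_smul_e ε hε0, hmul]
    funext k
    simp only [twist, Pi.smul_apply, smul_eq_mul]
    cases ε k <;> simp [conj_conj]
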